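/- Let (W,S) be a Coxeter system with Coxeter matrix m and let T ⊆ S be such that for every t ∈ T and s ∈ S∖T the exponent m_{st} is even or ∞. Then every w ∈ W decomposes uniquely as w = u·v with u ∈ ker φ_T and v ∈ W_{S∖T}. Moreover, if S_0 ⊆ T is closed under conjugacy of generators (if s ∈ S_0 and s' ∈ S is conjugate in W to s then s' ∈ S_0), then ℓ_{S_0}(w) = ℓ_{S_0}(u). -/

import Mathlib

/-!
Since `φ` is a retraction of `W` onto `W_{S∖T}`, `w = (w φ(w)⁻¹) φ(w)` is the only
decomposition.

For the count: the `k`-th entry of the right inversion sequence of a word is a conjugate of its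
`k`-th letter, so when `S₀` is closed under conjugacy, the `S₀`-letters of a word are counted by
the entries of its inversion sequence that are conjugate into `S₀`. Tits' cocycle, the action of
`W` on `W × ZMod 2` in which `s` conjugates the first coordinate and flips the sign when that
coordinate is `s` itself, shows that the parity of the multiplicity of each reflection in the
inversion sequence depends only on the product of the word. Inversion sequences of reduced words
have no repetitions, so any two reduced words for `w` have inversion sequences that are
permutations of each other. Hence `ℓ_{S₀}` is well defined, and a generator outside `S₀` appended
to a reduced word does not change it; so right multiplication by `W_{S∖T}` does not change it.
-/

open List

namespace CoxeterSystem

variable {B W : Type*} [Group W] {M : CoxeterMatrix B} (cs : CoxeterSystem M W)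

theorem alternatingWord_two_mul_succ (i j : B) (m : ℕ) :
    alternatingWord i j (2 * (m + 1)) = i :: j :: alternatingWord i j (2 * m) := by
  rw [show 2 * (m + 1) = 2 * m + 1 + 1 by ring, alternatingWord_succ', alternatingWord_succ']
  simp

theorem reverse_alternatingWord_two_mul (i j : B) (m : ℕ) :
    (alternatingWord i j (2 * m)).reverse = alternatingWord j i (2 * m) := by
  induction m with
  | zero => rfl
  | succ m ih =>
    rw [alternatingWord_two_mul_succ, reverse_cons, reverse_cons, ih,
      show 2 * (m + 1) = 2 * m + 1 + 1 by ring, alternatingWord_succ, alternatingWord_succ]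
    simp

theorem leftInvSeq_alternatingWord_two_mul (i j : B) (m : ℕ) :
    cs.leftInvSeq (alternatingWord j i (2 * m))
      = (range (2 * m)).map fun k ↦ cs.simple j * (cs.simple i * cs.simple j) ^ k := by
  refine ext_getElem (by simp) fun k hk _ ↦ ?_
  rw [getElem_leftInvSeq_alternatingWord _ _ _ _ _ (by simpa using hk),
    prod_alternatingWord_eq_mul_pow]
  simp [Nat.mul_add_div]

theorem even_count_rightInvSeq_alternatingWord [DecidableEq W] (i j : B) (t : W) :
    Even ((cs.rightInvSeq (alternatingWord i j (2 * M i j))).count t) := by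
  have hperiodic : ∀ k, cs.simple j * (cs.simple i * cs.simple j) ^ (M i j + k)
      = cs.simple j * (cs.simple i * cs.simple j) ^ k := fun k ↦ by
    rw [pow_add, cs.simple_mul_simple_pow, one_mul]
  rw [← reverse_alternatingWord_two_mul j i, rightInvSeq_reverse, count_reverse,
    leftInvSeq_alternatingWord_two_mul, two_mul, range_add, map_append, map_map,
    Function.comp_def]
  simp only [hperiodic, count_append]
  exact Even.add_self _

section ReflectionCocycle

variable [DecidableEq W]

def reflectionPerm (i : B) : Equiv.Perm (W × ZMod 2) :=
  Function.Involutive.toPerm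
    (fun p ↦ (cs.simple i * p.1 * cs.simple i, p.2 + if p.1 = cs.simple i then 1 else 0))
    (by
      rintro ⟨t, ε⟩
      by_cases ht : t = cs.simple i
      · simp [ht, add_assoc]
        decide
      · simp [ht, mul_assoc, mul_eq_one_iff_eq_inv])

theorem reflectionPerm_apply (i : B) (p : W × ZMod 2) :
    cs.reflectionPerm i p
      = (cs.simple i * p.1 * cs.simple i, p.2 + if p.1 = cs.simple i then 1 else 0) :=
  rfl

theorem prod_map_reflectionPerm_apply (ω : List B) (t : W) (ε : ZMod 2) :
    (ω.map cs.reflectionPerm).prod (t, ε)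
      = (cs.wordProd ω * t * (cs.wordProd ω)⁻¹, ε + (cs.rightInvSeq ω).count t) := by
  induction ω with
  | nil => simp
  | cons i ω ih =>
    have hconj : cs.wordProd ω * t * (cs.wordProd ω)⁻¹ = cs.simple i
        ↔ (cs.wordProd ω)⁻¹ * cs.simple i * cs.wordProd ω = t := by
      constructor <;> intro h <;> rw [← h] <;> group
    simp only [map_cons, prod_cons, Equiv.Perm.mul_apply, ih, reflectionPerm_apply,
      rightInvSeq, wordProd_cons, count_cons, beq_iff_eq, hconj]
    ext
    · simp [mul_assoc]
    · push_cast
      ring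

theorem isLiftable_reflectionPerm : M.IsLiftable cs.reflectionPerm := by
  intro i j
  have hprod : ∀ m, ((alternatingWord i j (2 * m)).map cs.reflectionPerm).prod
      = (cs.reflectionPerm i * cs.reflectionPerm j) ^ m := by
    intro m
    induction m with
    | zero => rfl
    | succ m ih => rw [alternatingWord_two_mul_succ, map_cons, map_cons, prod_cons, prod_cons, ih,
        pow_succ', mul_assoc]
  have hbraid : cs.wordProd (alternatingWord i j (2 * M i j)) = 1 := by
    rw [prod_alternatingWord_eq_mul_pow, if_pos (even_two_mul _), Nat.mul_div_cancel_left _ two_pos,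
      one_mul, simple_mul_simple_pow]
  ext ⟨t, ε⟩ : 1
  obtain ⟨c, hc⟩ := cs.even_count_rightInvSeq_alternatingWord i j t
  rw [← hprod, prod_map_reflectionPerm_apply, hbraid, hc]
  simp [CharTwo.add_self_eq_zero]

def reflectionCocycle : W →* Equiv.Perm (W × ZMod 2) :=
  cs.lift ⟨cs.reflectionPerm, cs.isLiftable_reflectionPerm⟩

theorem reflectionCocycle_wordProd (ω : List B) :
    cs.reflectionCocycle (cs.wordProd ω) = (ω.map cs.reflectionPerm).prod := by
  simp [reflectionCocycle, wordProd, map_list_prod, Function.comp_def]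

theorem count_rightInvSeq_cast_eq_of_wordProd_eq {ω ω' : List B}
    (h : cs.wordProd ω = cs.wordProd ω') (t : W) :
    ((cs.rightInvSeq ω).count t : ZMod 2) = (cs.rightInvSeq ω').count t := by
  have := congrArg (fun σ ↦ (cs.reflectionCocycle σ (t, 0)).2) h
  simpa [reflectionCocycle_wordProd, prod_map_reflectionPerm_apply] using this

end ReflectionCocycle

theorem rightInvSeq_perm_of_wordProd_eq {ω ω' : List B} (hω : cs.IsReduced ω)
    (hω' : cs.IsReduced ω') (h : cs.wordProd ω = cs.wordProd ω') :
    cs.rightInvSeq ω ~ cs.rightInvSeq ω' := by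
  classical
  refine perm_iff_count.mpr fun t ↦ ?_
  have h₁ := nodup_iff_count_le_one.mp hω.nodup_rightInvSeq t
  have h₂ := nodup_iff_count_le_one.mp hω'.nodup_rightInvSeq t
  have := (ZMod.natCast_eq_natCast_iff' _ _ 2).mp (cs.count_rightInvSeq_cast_eq_of_wordProd_eq h t)
  omega

theorem countP_eq_countP_rightInvSeq {p : B → Bool} {q : W → Bool}
    (hq : ∀ i w, q (w⁻¹ * cs.simple i * w) = p i) (ω : List B) :
    ω.countP p = (cs.rightInvSeq ω).countP q := by
  induction ω with
  | nil => rfl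
  | cons i ω ih => simp [rightInvSeq, countP_cons, ih, hq]

theorem countP_eq_of_wordProd_eq {p : B → Bool}
    (hp : ∀ i j, IsConj (cs.simple i) (cs.simple j) → p i = p j) {ω ω' : List B}
    (hω : cs.IsReduced ω) (hω' : cs.IsReduced ω') (h : cs.wordProd ω = cs.wordProd ω') :
    ω.countP p = ω'.countP p := by
  classical
  let q : W → Bool := fun t ↦ decide (∃ i, p i ∧ IsConj (cs.simple i) t)
  have hq : ∀ i w, q (w⁻¹ * cs.simple i * w) = p i := by
    intro i w
    have hconj : IsConj (cs.simple i) (w⁻¹ * cs.simple i * w) := isConj_iff.mpr ⟨w⁻¹, by group⟩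
    cases hpi : p i
    · exact decide_eq_false fun ⟨j, hj, hj'⟩ ↦
        absurd (hp j i (hj'.trans hconj.symm)) (by simp [hj, hpi])
    · exact decide_eq_true ⟨i, hpi, hconj⟩
  rw [cs.countP_eq_countP_rightInvSeq hq, cs.countP_eq_countP_rightInvSeq hq]
  exact (cs.rightInvSeq_perm_of_wordProd_eq hω hω' h).countP_eq q

section LetterCount

variable {p : B → Bool}

/-- `ℓ_{S₀}` for `p = (· ∈ S₀)`, read off an arbitrarily chosen reduced word. -/
noncomputable def countLetters (p : B → Bool) (w : W) : ℕ :=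
  (Classical.choose (cs.exists_isReduced w)).countP p

theorem countLetters_wordProd (hp : ∀ i j, IsConj (cs.simple i) (cs.simple j) → p i = p j)
    {ω : List B} (hω : cs.IsReduced ω) :
    cs.countLetters p (cs.wordProd ω) = ω.countP p :=
  have h := Classical.choose_spec (cs.exists_isReduced (cs.wordProd ω))
  cs.countP_eq_of_wordProd_eq hp h.1 hω h.2.symm

theorem countLetters_mul_simple (hp : ∀ i j, IsConj (cs.simple i) (cs.simple j) → p i = p j)
    {i : B} (hi : p i = false) (w : W) :
    cs.countLetters p (w * cs.simple i) = cs.countLetters p w := by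
  wlog hlen : cs.length (w * cs.simple i) = cs.length w + 1 generalizing w
  · have hw : w * cs.simple i * cs.simple i = w := by simp [mul_assoc]
    have := this (w * cs.simple i) (by rw [hw]; have := cs.length_mul_simple w i; omega)
    rw [hw] at this
    exact this.symm
  obtain ⟨ω, hω, rfl⟩ := cs.exists_isReduced w
  have hred : cs.IsReduced (ω ++ [i]) := by
    rw [IsReduced, wordProd_append, wordProd_singleton, hlen, hω, length_append, length_singleton]
  rw [← wordProd_singleton, ← wordProd_append, cs.countLetters_wordProd hp hred,
    cs.countLetters_wordProd hp hω, countP_append]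
  simp [hi]

theorem countLetters_mul_of_mem_closure
    (hp : ∀ i j, IsConj (cs.simple i) (cs.simple j) → p i = p j) {U : Set B}
    (hU : ∀ i ∈ U, p i = false) {v : W} (hv : v ∈ Subgroup.closure (cs.simple '' U)) (w : W) :
    cs.countLetters p (w * v) = cs.countLetters p w := by
  induction hv using Subgroup.closure_induction generalizing w with
  | mem _ hg =>
    obtain ⟨i, hi, rfl⟩ := hg
    exact cs.countLetters_mul_simple hp (hU i hi) w
  | one => rw [mul_one]
  | mul a b _ _ iha ihb => rw [← mul_assoc, ihb, iha]
  | inv a _ iha => simpa using (iha (w * a⁻¹)).symm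

end LetterCount

theorem map_mem_closure_simple_compl {T : Set B} {φ : W →* W}
    (hφ₁ : ∀ s ∉ T, φ (cs.simple s) = cs.simple s) (hφ₂ : ∀ t ∈ T, φ (cs.simple t) = 1) (w : W) :
    φ w ∈ Subgroup.closure (cs.simple '' Tᶜ) := by
  suffices (⊤ : Subgroup W).map φ ≤ Subgroup.closure (cs.simple '' Tᶜ) from this ⟨w, trivial, rfl⟩
  rw [← cs.subgroup_closure_range_simple, MonoidHom.map_closure, Subgroup.closure_le]
  rintro _ ⟨_, ⟨i, rfl⟩, rfl⟩
  by_cases hi : i ∈ T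
  · simp [hφ₂ i hi]
  · rw [hφ₁ i hi]
    exact Subgroup.subset_closure ⟨i, hi, rfl⟩

end CoxeterSystem

theorem MonoidHom.existsUnique_mem_ker_mul_mem {G : Type*} [Group G] (φ : G →* G) {H : Subgroup G}
    (hmaps : ∀ g, φ g ∈ H) (hfix : ∀ h ∈ H, φ h = h) (g : G) :
    ∃! p : G × G, p.1 ∈ φ.ker ∧ p.2 ∈ H ∧ g = p.1 * p.2 := by
  refine ⟨(g * (φ g)⁻¹, φ g), ⟨?_, hmaps g, by simp⟩, ?_⟩
  · rw [mem_ker, map_mul, map_inv, hfix _ (hmaps g), mul_inv_cancel]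
  · rintro ⟨u, v⟩ ⟨hu, hv, rfl⟩
    have hφ : φ (u * v) = v := by rw [map_mul, mem_ker.mp hu, one_mul, hfix v hv]
    ext <;> simp [hφ]

theorem unique_decomposition_and_count_general {B W : Type*} [Group W] (M : CoxeterMatrix B)
    (cs : CoxeterSystem M W) (T : Set B)
    (φ : W →* W)
    (hφ₁ : ∀ s ∉ T, φ (cs.simple s) = cs.simple s)
    (hφ₂ : ∀ t ∈ T, φ (cs.simple t) = 1)
    (S₀ : Set B) [DecidablePred (· ∈ S₀)] (hS₀T : S₀ ⊆ T)
    (hS₀ : ∀ s ∈ S₀, ∀ s' : B, IsConj (cs.simple s) (cs.simple s') → s' ∈ S₀)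
    (w : W) :
    (∃! p : W × W, p.1 ∈ φ.ker ∧ p.2 ∈ Subgroup.closure (cs.simple '' Tᶜ) ∧ w = p.1 * p.2) ∧
    (∀ u v : W, u ∈ φ.ker → v ∈ Subgroup.closure (cs.simple '' Tᶜ) → w = u * v →
      ∀ ω ωᵤ : List B, cs.IsReduced ω → cs.wordProd ω = w →
        cs.IsReduced ωᵤ → cs.wordProd ωᵤ = u →
        ω.countP (fun i => decide (i ∈ S₀)) = ωᵤ.countP (fun i => decide (i ∈ S₀))) := by
  have hfix : ∀ v ∈ Subgroup.closure (cs.simple '' Tᶜ), φ v = v :=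
    fun v hv ↦ MonoidHom.eqOn_closure (g := MonoidHom.id W) (by
      rintro _ ⟨i, hi, rfl⟩
      exact hφ₁ i hi) hv
  refine ⟨φ.existsUnique_mem_ker_mul_mem (cs.map_mem_closure_simple_compl hφ₁ hφ₂) hfix w, ?_⟩
  rintro u v - hv rfl ω ωᵤ hω hωw hωᵤ rfl
  have hp : ∀ i j, IsConj (cs.simple i) (cs.simple j) → decide (i ∈ S₀) = decide (j ∈ S₀) :=
    fun i j h ↦ decide_eq_decide.mpr ⟨fun hi ↦ hS₀ i hi j h, fun hj ↦ hS₀ j hj i h.symm⟩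
  rw [← cs.countLetters_wordProd hp hω, ← cs.countLetters_wordProd hp hωᵤ, hωw,
    cs.countLetters_mul_of_mem_closure hp (fun i hi ↦ decide_eq_false (mt (@hS₀T i) hi)) hv]

/-- Under the evenness assumption on `T ⊆ S`, every `w ∈ W` decomposes uniquely as `w = u * v`
with `u ∈ ker φ_T` and `v ∈ W_{S∖T}`. Moreover, if `S₀ ⊆ T` is closed under conjugacy of
generators, then `ℓ_{S₀}(w) = ℓ_{S₀}(u)`, where `ℓ_{S₀}` counts (with multiplicity) the letters
from `S₀` in any reduced word representing the given element. -/
theorem unique_decomposition_and_count {B W : Type*} [Group W] (M : CoxeterMatrix B)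
    (cs : CoxeterSystem M W) (T : Set B)
    (heven : ∀ t ∈ T, ∀ s ∉ T, Even (M t s))
    (φ : W →* W)
    (hφ₁ : ∀ s ∉ T, φ (cs.simple s) = cs.simple s)
    (hφ₂ : ∀ t ∈ T, φ (cs.simple t) = 1)
    (S₀ : Set B) [DecidablePred (· ∈ S₀)] (hS₀T : S₀ ⊆ T)
    (hS₀ : ∀ s ∈ S₀, ∀ s' : B, IsConj (cs.simple s) (cs.simple s') → s' ∈ S₀)
    (w : W) :
    (∃! p : W × W, p.1 ∈ φ.ker ∧ p.2 ∈ Subgroup.closure (cs.simple '' Tᶜ) ∧ w = p.1 * p.2) ∧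
    (∀ u v : W, u ∈ φ.ker → v ∈ Subgroup.closure (cs.simple '' Tᶜ) → w = u * v →
      ∀ ω ωᵤ : List B, cs.IsReduced ω → cs.wordProd ω = w →
        cs.IsReduced ωᵤ → cs.wordProd ωᵤ = u →
        ω.countP (fun i => decide (i ∈ S₀)) = ωᵤ.countP (fun i => decide (i ∈ S₀))) :=
  unique_decomposition_and_count_general M cs T φ hφ₁ hφ₂ S₀ hS₀T hS₀ w
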